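/- (Single dual-particle duality function) For the duality function D(η, ξ) of ASEP(q,j) evaluated at the dual configuration ξ^{(i)} with a single particle at site i, one has D(η, ξ^{(i)}) = q^{4ji-1}/(q^{2j} - q^{-2j}) · (q^{2N_i(η)} - q^{2N_{i+1}(η)}), where N_i(η) = ∑_{k ≥ i} η_k. -/

import Mathlib

/-- The q-number [n]_q = (q^n - q^{-n})/(q - q^{-1}). -/
noncomputable def qNum (q : ℝ) (n : ℕ) : ℝ := (q ^ n - q⁻¹ ^ n) / (q - q⁻¹)

/-- The q-factorial [n]_q!. -/
noncomputable def qFact (q : ℝ) (n : ℕ) : ℝ := ∏ k ∈ Finset.Icc 1 n, qNum q k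

/-- The q-binomial coefficient. -/
noncomputable def qBinom (q : ℝ) (n k : ℕ) : ℝ := qFact q n / (qFact q k * qFact q (n - k))

/-- N_i(η) = ∑_{k ≥ i} η_k. -/
noncomputable def Nright (η : ℤ → ℕ) (i : ℤ) : ℤ :=
  ∑ᶠ k : ℤ, if i ≤ k then (η k : ℤ) else 0

/-- The self-duality function
D(η,ξ) = ∏_{m∈ℤ} [binom(η_m,ξ_m)_q/binom(2j,ξ_m)_q] q^{(η_m-ξ_m)[2∑_{k<m}ξ_k+ξ_m]+4jmξ_m} 1_{ξ_m≤η_m},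
with J = 2j. -/
noncomputable def Dfun (q : ℝ) (J : ℕ) (η ξ : ℤ → ℕ) : ℝ :=
  ∏ᶠ m : ℤ,
    (qBinom q (η m) (ξ m) / qBinom q J (ξ m)) *
      q ^ (((η m : ℤ) - ξ m) * (2 * (∑ᶠ k : ℤ, if k < m then (ξ k : ℤ) else 0) + ξ m)
            + 2 * J * m * ξ m) *
      (if ξ m ≤ η m then 1 else 0)

/-! With a single dual particle at `i`, the factor of `D` at a site `m ≠ i` is `q ^ (2 η_m)` if
`m > i` and `1` otherwise, so these factors multiply to `q ^ (2 N_{i+1})`. The factor at `i` is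
`[η_i]_q / [2j]_q · q ^ (η_i - 1 + 4ji)` (the indicator `1 ≤ η_i` is absorbed since `[0]_q = 0`),
and `[η_i]_q q ^ η_i = (q ^ (2 η_i) - 1) / (q - q⁻¹)`; with `N_i = η_i + N_{i+1}` this is the
claimed difference. -/

section QNumbers

variable {q : ℝ}

lemma qNum_pos (hq0 : 0 < q) (hq1 : q ≠ 1) {k : ℕ} (hk : 1 ≤ k) : 0 < qNum q k := by
  rcases hq1.lt_or_gt with hlt | hgt
  · have h1 : q ^ k < 1 := pow_lt_one₀ hq0.le hlt (by omega)
    have h2 : 1 < q⁻¹ ^ k := one_lt_pow₀ ((one_lt_inv₀ hq0).mpr hlt) (by omega)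
    have h3 : q < q⁻¹ := hlt.trans ((one_lt_inv₀ hq0).mpr hlt)
    exact div_pos_of_neg_of_neg (by linarith) (by linarith)
  · have h1 : 1 < q ^ k := one_lt_pow₀ hgt (by omega)
    have h2 : q⁻¹ ^ k < 1 := pow_lt_one₀ (by positivity) (inv_lt_one_of_one_lt₀ hgt) (by omega)
    have h3 : q⁻¹ < q := (inv_lt_one_of_one_lt₀ hgt).trans hgt
    exact div_pos (by linarith) (by linarith)

lemma qNum_zero : qNum q 0 = 0 := by simp [qNum]

lemma sub_inv_ne_zero (hq0 : 0 < q) (hq1 : q ≠ 1) : q - q⁻¹ ≠ 0 := by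
  have h := qNum_pos hq0 hq1 le_rfl
  rw [qNum, pow_one, pow_one] at h
  exact fun h0 => by simp [h0] at h

lemma qNum_one (hq0 : 0 < q) (hq1 : q ≠ 1) : qNum q 1 = 1 := by
  rw [qNum, pow_one, pow_one, div_self (sub_inv_ne_zero hq0 hq1)]

lemma qNum_eq_zpow_sub_zpow (n : ℕ) :
    qNum q n = (q ^ (n : ℤ) - q ^ (-(n : ℤ))) / (q - q⁻¹) := by
  rw [qNum, zpow_neg, zpow_natCast, inv_pow]

lemma qFact_pos (hq0 : 0 < q) (hq1 : q ≠ 1) (n : ℕ) : 0 < qFact q n :=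
  Finset.prod_pos fun _ hk => qNum_pos hq0 hq1 (Finset.mem_Icc.mp hk).1

lemma qFact_zero : qFact q 0 = 1 := by simp [qFact]

lemma qFact_succ (n : ℕ) : qFact q (n + 1) = qFact q n * qNum q (n + 1) :=
  Finset.prod_Icc_succ_top (by omega) _

lemma qBinom_zero (hq0 : 0 < q) (hq1 : q ≠ 1) (n : ℕ) : qBinom q n 0 = 1 := by
  rw [qBinom, qFact_zero, one_mul, Nat.sub_zero, div_self (qFact_pos hq0 hq1 n).ne']

lemma qBinom_one (hq0 : 0 < q) (hq1 : q ≠ 1) {n : ℕ} (hn : 1 ≤ n) :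
    qBinom q n 1 = qNum q n := by
  obtain ⟨m, rfl⟩ := Nat.exists_eq_add_of_le' hn
  rw [qBinom, Nat.add_sub_cancel, qFact_succ, ← zero_add 1, qFact_succ, qFact_zero,
    zero_add, one_mul, qNum_one hq0 hq1, one_mul,
    mul_div_cancel_left₀ _ (qFact_pos hq0 hq1 m).ne']

lemma qBinom_one_mul_ite (hq0 : 0 < q) (hq1 : q ≠ 1) (n : ℕ) :
    qBinom q n 1 * (if 1 ≤ n then 1 else 0) = qNum q n := by
  rcases Nat.eq_zero_or_pos n with rfl | hn
  · simp [qNum_zero]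
  · rw [if_pos (Nat.one_le_iff_ne_zero.mpr hn.ne'), mul_one, qBinom_one hq0 hq1 hn]

end QNumbers

lemma mulSupport_zpow_subset {α G₀ : Type*} [GroupWithZero G₀] (a : G₀) (f : α → ℤ) :
    Function.mulSupport (fun x => a ^ f x) ⊆ Function.support f := fun x hx h0 => by
  simp [h0] at hx

lemma finprod_zpow {α G₀ : Type*} [CommGroupWithZero G₀] {a : G₀} (ha : a ≠ 0) {f : α → ℤ}
    (hf : (Function.support f).Finite) : ∏ᶠ x, a ^ f x = a ^ ∑ᶠ x, f x := by
  classical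
  rw [finsum_eq_sum f hf, finprod_eq_prod_of_mulSupport_subset _
    ((mulSupport_zpow_subset a f).trans hf.coe_toFinset.ge)]
  induction hf.toFinset using Finset.induction with
  | empty => simp
  | insert x s hx ih => rw [Finset.prod_insert hx, Finset.sum_insert hx, zpow_add₀ ha, ih]

lemma support_ite_le_subset (η : ℤ → ℕ) (i : ℤ) :
    Function.support (fun k : ℤ => if i ≤ k then (η k : ℤ) else 0) ⊆ {k | i ≤ k ∧ η k ≠ 0} :=
  fun k hk => by
    by_cases h : i ≤ k
    · simp_all
    · simp [h] at hk

lemma Nright_eq_add_Nright_succ (η : ℤ → ℕ) (i : ℤ)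
    (hfin : {k : ℤ | i + 1 ≤ k ∧ η k ≠ 0}.Finite) :
    Nright η i = η i + Nright η (i + 1) := by
  have hsplit : ∀ k : ℤ, (if i ≤ k then (η k : ℤ) else 0) =
      (if k = i then (η i : ℤ) else 0) + (if i + 1 ≤ k then (η k : ℤ) else 0) := fun k => by
    rcases lt_trichotomy k i with h | rfl | h
    · rw [if_neg (by omega), if_neg (by omega), if_neg (by omega), add_zero]
    · rw [if_pos le_rfl, if_pos rfl, if_neg (by omega), add_zero]
    · rw [if_pos (by omega), if_neg (by omega), if_pos (by omega), zero_add]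
  have hsingle : (Function.support fun k : ℤ => if k = i then (η i : ℤ) else 0).Finite :=
    (Set.finite_singleton i).subset fun k hk => by_contra fun h => hk (if_neg h)
  rw [Nright, finsum_congr hsplit,
    finsum_add_distrib hsingle (hfin.subset (support_ite_le_subset η _)),
    finsum_eq_single _ i fun k hk => if_neg hk, if_pos rfl, Nright]

lemma finsum_ite_lt_single (i m : ℤ) :
    (∑ᶠ k : ℤ, if k < m then (((if k = i then 1 else 0 : ℕ)) : ℤ) else 0) =
      if i < m then 1 else 0 := by
  rw [finsum_eq_single _ i fun k hk => by simp [hk]]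
  simp

lemma Dfun_single_eq_finprod (q : ℝ) (hq0 : 0 < q) (hq1 : q ≠ 1) (J : ℕ) (hJ : 1 ≤ J)
    (η : ℤ → ℕ) (i : ℤ) :
    Dfun q J η (fun m => if m = i then 1 else 0) =
      ∏ᶠ m : ℤ,
        (if m = i then qNum q (η i) / qNum q J * q ^ ((η i : ℤ) - 1 + 2 * J * i) else 1) *
          q ^ (2 * if i + 1 ≤ m then (η m : ℤ) else 0) := by
  refine finprod_congr fun m => ?_
  rw [finsum_ite_lt_single]
  rcases eq_or_ne m i with rfl | hm
  · have hne : ¬ m + 1 ≤ m := by omega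
    simp only [if_true, lt_irrefl, if_false, hne, mul_zero, zpow_zero, mul_one]
    rw [qBinom_one hq0 hq1 hJ, ← qBinom_one_mul_ite hq0 hq1 (η m)]
    push_cast
    ring_nf
  · have hlt : (i < m) ↔ (i + 1 ≤ m) := Int.lt_iff_add_one_le
    simp only [hm, if_false, qBinom_zero hq0 hq1, div_one, one_mul, Nat.zero_le, if_true,
      mul_one, Nat.cast_zero, sub_zero, add_zero, mul_zero, hlt]
    split_ifs <;> ring_nf

lemma Dfun_single (q : ℝ) (hq0 : 0 < q) (hq1 : q ≠ 1) (J : ℕ) (hJ : 1 ≤ J)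
    (η : ℤ → ℕ) (i : ℤ) (hfin : {k : ℤ | i + 1 ≤ k ∧ η k ≠ 0}.Finite) :
    Dfun q J η (fun m => if m = i then 1 else 0) =
      qNum q (η i) / qNum q J * q ^ ((η i : ℤ) - 1 + 2 * J * i) * q ^ (2 * Nright η (i + 1)) := by
  have htail : (Function.support fun m : ℤ => 2 * if i + 1 ≤ m then (η m : ℤ) else 0).Finite :=
    (hfin.subset (support_ite_le_subset η _)).subset
      (Function.support_mul_subset_right (fun _ => 2) _)
  rw [Dfun_single_eq_finprod q hq0 hq1 J hJ, finprod_mul_distrib,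
    finprod_eq_single _ i fun m hm => if_neg hm, if_pos rfl, finprod_zpow hq0.ne' htail, Nright,
    mul_finsum]
  case hf => exact (Set.finite_singleton i).subset fun m hm => by_contra fun h => hm (if_neg h)
  case hg => exact htail.subset (mulSupport_zpow_subset _ _)

theorem stmt14_general (q : ℝ) (hq0 : 0 < q) (hq1 : q < 1) (J : ℕ) (hJ : 1 ≤ J)
    (η : ℤ → ℕ)
    (hfin : ∀ m : ℤ, {k : ℤ | m ≤ k ∧ η k ≠ 0}.Finite) (i : ℤ) :
    Dfun q J η (fun m => if m = i then 1 else 0)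
      = q ^ (2 * (J : ℤ) * i - 1) / (q ^ (J : ℤ) - q ^ (-(J : ℤ))) *
        (q ^ (2 * Nright η i) - q ^ (2 * Nright η (i + 1))) := by
  have hq : q ≠ 0 := hq0.ne'
  rw [Dfun_single q hq0 hq1.ne J hJ η i (hfin _), Nright_eq_add_Nright_succ η i (hfin _),
    qNum_eq_zpow_sub_zpow, qNum_eq_zpow_sub_zpow,
    div_div_div_cancel_right₀ (sub_inv_ne_zero hq0 hq1.ne)]
  simp only [zpow_add₀ hq, zpow_sub₀ hq, zpow_mul', zpow_neg, mul_add, zpow_one]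
  field_simp

/-- (Single dual-particle duality function)
D(η, ξ^{(i)}) = q^{4ji-1}/(q^{2j}-q^{-2j}) · (q^{2N_i(η)} - q^{2N_{i+1}(η)}), J = 2j. -/
theorem stmt14 (q : ℝ) (hq0 : 0 < q) (hq1 : q < 1) (J : ℕ) (hJ : 1 ≤ J)
    (η : ℤ → ℕ) (hb : ∀ k, η k ≤ J)
    (hfin : ∀ m : ℤ, {k : ℤ | m ≤ k ∧ η k ≠ 0}.Finite) (i : ℤ) :
    Dfun q J η (fun m => if m = i then 1 else 0)
      = q ^ (2 * (J : ℤ) * i - 1) / (q ^ (J : ℤ) - q ^ (-(J : ℤ))) *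
        (q ^ (2 * Nright η i) - q ^ (2 * Nright η (i + 1))) :=
  stmt14_general q hq0 hq1 J hJ η hfin i
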